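/- arXiv:1507.02999 — 2 statements merged into one kernel-verified Lean document; each statement's English description precedes it below -/
import Mathlib

section
/- Let H be a real N×K matrix and Φ a real M₂×N matrix satisfying M·Φ·Φᵀ = I (for a fixed positive real M). Then trace(H·Hᵀ·Φᵀ·Φ) ≥ (1/M)·∑_{i=N-M₂+1}^{N} ρᵢ², where ρ₁² ≥ … ≥ ρ_N² are the eigenvalues of H·Hᵀ in decreasing order, with equality when the rows of Φ are (1/√M) times the eigenvectors corresponding to the M₂ smallest eigenvalues. -/
/-! After conjugating by the eigenbasis `u`, the matrix `Q = √M • Φ u` has orthonormal rows and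
`M * trace (H Hᵀ Φᵀ Φ) = ∑ ρ i * c i` with `c i = (Qᵀ Q) i i`. Since `Qᵀ Q` is an orthogonal
projection of rank `M₂`, the weights satisfy `0 ≤ c i ≤ 1` and `∑ c i = M₂`; among all such
weights the sum is smallest when weight `1` sits on the `M₂` smallest eigenvalues, which is a
threshold ("bathtub") argument. The eigenvector choice of `Φ` realises exactly these weights. -/

open Matrix

theorem Matrix.trace_mul_diagonal_mul_transpose {m n R : Type*} [Fintype m] [Fintype n]
    [DecidableEq n] [CommRing R] (Q : Matrix m n R) (ρ : n → R) :
    trace (Q * diagonal ρ * Qᵀ) = ∑ i, ρ i * (Qᵀ * Q) i i := by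
  rw [trace_mul_cycle]
  simp [trace, mul_diagonal, mul_comm]

theorem Matrix.submatrix_mul_mul_transpose_submatrix {m n o R : Type*} [Fintype n] [CommRing R]
    (X : Matrix m n R) (A : Matrix n n R) (f : o → m) :
    X.submatrix f id * A * (X.submatrix f id)ᵀ = (X * A * Xᵀ).submatrix f f := by
  rw [transpose_submatrix, submatrix_mul _ _ _ id _ Function.bijective_id,
    submatrix_mul _ _ _ id _ Function.bijective_id, submatrix_id_id]

theorem Matrix.trace_smul_mul_mul_transpose_smul {m n R : Type*} [Fintype m] [Fintype n]
    [CommRing R] (c : R) (X : Matrix m n R) (A : Matrix n n R) :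
    trace (c • X * A * (c • X)ᵀ) = c * c * trace (X * A * Xᵀ) := by
  simp only [transpose_smul, Matrix.smul_mul, Matrix.mul_smul, trace_smul, smul_eq_mul, mul_assoc]

section Ordered

variable {R : Type*} [CommRing R] [LinearOrder R] [IsStrictOrderedRing R]

open Finset in
theorem Finset.sum_le_sum_mul_of_sum_eq_card {ι : Type*} [Fintype ι] {ρ c : ι → R}
    {B : Finset ι} (t : R) (hB : ∀ i ∈ B, ρ i ≤ t) (hBc : ∀ i ∉ B, t ≤ ρ i)
    (hc₀ : ∀ i, 0 ≤ c i) (hc₁ : ∀ i, c i ≤ 1) (hc : ∑ i, c i = #B) :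
    ∑ i ∈ B, ρ i ≤ ∑ i, ρ i * c i := by
  classical
  -- `(ρ i - t) * d i ≥ 0` termwise, and `∑ d = 0` makes the `t`-parts cancel.
  set d : ι → R := fun i => c i - if i ∈ B then 1 else 0
  have hd : ∑ i, d i = 0 := by
    simp [d, Finset.sum_sub_distrib, hc]
  have hρd : ∀ i, t * d i ≤ ρ i * d i := fun i => by
    by_cases hi : i ∈ B
    · simp only [d, hi, if_true]
      nlinarith [hB i hi, hc₁ i]
    · simpa [d, hi] using mul_le_mul_of_nonneg_right (hBc i hi) (hc₀ i)
  calc ∑ i ∈ B, ρ i = ∑ i, ρ i * c i - ∑ i, ρ i * d i := by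
        simp [d, mul_sub, Finset.sum_sub_distrib]
    _ ≤ ∑ i, ρ i * c i - ∑ i, t * d i :=
        sub_le_sub_left (Finset.sum_le_sum fun i _ => hρd i) _
    _ = ∑ i, ρ i * c i := by rw [← Finset.mul_sum, hd, mul_zero, sub_zero]

def lastIndices {m n : ℕ} (h : m ≤ n) : Fin m ↪ Fin n :=
  ⟨fun i => ⟨n - m + i, by omega⟩, fun i j hij => by simpa [Fin.ext_iff] using hij⟩

@[simp]
theorem lastIndices_apply_val {m n : ℕ} (h : m ≤ n) (i : Fin m) :
    (lastIndices h i : ℕ) = n - m + i := rfl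

theorem Antitone.sum_lastIndices_le_sum_mul {m n : ℕ} {ρ : Fin n → R} (hρ : Antitone ρ)
    (h : m ≤ n) {c : Fin n → R} (hc₀ : ∀ i, 0 ≤ c i) (hc₁ : ∀ i, c i ≤ 1) (hc : ∑ i, c i = m) :
    ∑ i, ρ (lastIndices h i) ≤ ∑ i, ρ i * c i := by
  obtain rfl | hn := Nat.eq_zero_or_pos n
  · obtain rfl : m = 0 := by omega
    simp
  rw [← Finset.sum_map _ (lastIndices h)]
  -- threshold: the first of the last `m` values, or the last value if `m = 0`
  refine Finset.sum_le_sum_mul_of_sum_eq_card (ρ ⟨n - max m 1, by omega⟩) ?_ ?_ hc₀ hc₁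
    (by simpa using hc)
  · simp only [Finset.mem_map, Finset.mem_univ, true_and, forall_exists_index]
    rintro _ i rfl
    exact hρ (Fin.le_def.2 (by simp; omega))
  · intro i hi
    refine hρ (Fin.le_def.2 (not_lt.1 fun (hlt : n - max m 1 < i) => hi ?_))
    exact Finset.mem_map.2 ⟨⟨i - (n - m), by omega⟩, Finset.mem_univ _,
      Fin.ext (by simp; omega)⟩

theorem Matrix.transpose_mul_self_apply_self_mem_Icc {m n : Type*} [Fintype m] [Fintype n]
    [DecidableEq m] {Q : Matrix m n R} (hQ : Q * Qᵀ = 1) (i : n) : (Qᵀ * Q) i i ∈ Set.Icc 0 1 := by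
  set P := Qᵀ * Q
  have hidem : P * P = P := by
    simp only [P, Matrix.mul_assoc, ← Matrix.mul_assoc Q, hQ, Matrix.one_mul]
  have hsymm : ∀ j, P j i = P i j := fun j => by
    simp only [P, mul_apply, transpose_apply, mul_comm]
  have hsq : P i i ^ 2 ≤ P i i := by
    calc P i i ^ 2 ≤ ∑ j, P i j ^ 2 :=
          Finset.single_le_sum (f := fun j => P i j ^ 2) (fun j _ => sq_nonneg _)
            (Finset.mem_univ i)
      _ = P i i := by
          conv_rhs => rw [← hidem]
          simp only [mul_apply, hsymm, sq]
  constructor <;> nlinarith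

theorem sum_lastIndices_le_trace_mul_diagonal_mul_transpose {m n : ℕ} (h : m ≤ n)
    {ρ : Fin n → R} (hρ : Antitone ρ) {Q : Matrix (Fin m) (Fin n) R} (hQ : Q * Qᵀ = 1) :
    ∑ i, ρ (lastIndices h i) ≤ trace (Q * diagonal ρ * Qᵀ) := by
  have hc : ∑ i, (Qᵀ * Q) i i = m := by
    simpa [trace, hQ] using trace_mul_comm Qᵀ Q
  rw [trace_mul_diagonal_mul_transpose]
  exact hρ.sum_lastIndices_le_sum_mul h (fun i => (transpose_mul_self_apply_self_mem_Icc hQ i).1)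
    (fun i => (transpose_mul_self_apply_self_mem_Icc hQ i).2) hc

end Ordered

/-- Optimality of the min-energy sampler (Theorem 1): for any `Φ` with `M • Φ Φᵀ = 1`,
`trace (H Hᵀ Φᵀ Φ) ≥ (1/M) ∑_{i=N-M₂}^{N-1} ρ i` (decreasingly-ordered eigenvalues of `H Hᵀ`),
with equality for rows of `Φ` being `(1/√M)` times the bottom `M₂` eigenvectors. -/
theorem maximally_uncorrelated_min_energy
    {N K M₂ : ℕ} (hM2 : M₂ ≤ N) (M : ℝ) (hM : 0 < M)
    (H : Matrix (Fin N) (Fin K) ℝ) (u : Matrix (Fin N) (Fin N) ℝ) (ρ : Fin N → ℝ)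
    (hu : u * uᵀ = 1) (hspec : H * Hᵀ = u * Matrix.diagonal ρ * uᵀ) (hρ : Antitone ρ)
    (Φ : Matrix (Fin M₂) (Fin N) ℝ) (hΦ : M • (Φ * Φᵀ) = 1) :
    (1 / M) * ∑ i : Fin M₂, ρ ⟨N - M₂ + i.1, by have := i.isLt; omega⟩ ≤
      Matrix.trace (H * Hᵀ * Φᵀ * Φ) ∧
    Matrix.trace (H * Hᵀ *
        ((Real.sqrt M)⁻¹ • (uᵀ.submatrix
          (fun i : Fin M₂ => (⟨N - M₂ + i.1, by have := i.isLt; omega⟩ : Fin N)) id))ᵀ *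
        ((Real.sqrt M)⁻¹ • (uᵀ.submatrix
          (fun i : Fin M₂ => (⟨N - M₂ + i.1, by have := i.isLt; omega⟩ : Fin N)) id)))
      = (1 / M) * ∑ i : Fin M₂, ρ ⟨N - M₂ + i.1, by have := i.isLt; omega⟩ := by
  have hsqrt : √M * √M = M := Real.mul_self_sqrt hM.le
  constructor
  · set Q := √M • (Φ * u)
    have hQ : Q * Qᵀ = 1 := by
      rw [← hΦ, ← hsqrt, ← smul_smul]
      simp only [Q, transpose_smul, transpose_mul, Matrix.smul_mul, Matrix.mul_smul,
        Matrix.mul_assoc, ← Matrix.mul_assoc u, hu, Matrix.one_mul]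
    have htrace : trace (Q * diagonal ρ * Qᵀ) = M * trace (H * Hᵀ * Φᵀ * Φ) := by
      rw [trace_smul_mul_mul_transpose_smul, hsqrt, trace_mul_cycle (H * Hᵀ), hspec,
        transpose_mul]
      simp only [Matrix.mul_assoc]
    calc (1 / M) * ∑ i, ρ (lastIndices hM2 i)
        ≤ (1 / M) * trace (Q * diagonal ρ * Qᵀ) := by
          gcongr
          exact sum_lastIndices_le_trace_mul_diagonal_mul_transpose hM2 hρ hQ
      _ = trace (H * Hᵀ * Φᵀ * Φ) := by
          rw [htrace, ← mul_assoc, one_div_mul_cancel hM.ne', one_mul]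
  · have hdiag : uᵀ * (H * Hᵀ) * uᵀᵀ = diagonal ρ := by
      rw [hspec, transpose_transpose, ← Matrix.mul_assoc, ← Matrix.mul_assoc,
        mul_eq_one_comm.mp hu, Matrix.one_mul, Matrix.mul_assoc, mul_eq_one_comm.mp hu,
        Matrix.mul_one]
    rw [trace_mul_cycle, trace_smul_mul_mul_transpose_smul,
      submatrix_mul_mul_transpose_submatrix, hdiag, ← mul_inv, hsqrt, one_div]
    simp [trace]
end

section
/- Let δ > 0, σ₀² > 0, σ_x² > 0, M > 0, and ρ_a² > ρ_b² ≥ 0. If L ≥ 1 + M/(δ·σ₀²), then (σ₀² + L·σ_x²·ρ_b² + M/δ)/(σ₀² + L·σ_x²·ρ_a² + M/δ) ≤ (σ₀² + σ_x²·ρ_b²)/(σ₀² + σ_x²·ρ_a²). -/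
/-!
Both sides have the form `(p + u ρ_b²) / (p + u ρ_a²)`, a quantity that decreases as the
gain-to-noise ratio `u / p` grows (because `ρ_b² < ρ_a²`). With `L` imprecise devices this ratio
is `L σ_x² / (σ₀² + M/δ)`, with one ideal device it is `σ_x² / σ₀²`, and the budget condition
`L ≥ 1 + M/(δ σ₀²)` says precisely that the former is at least the latter.
-/

/-- Cross-multiplied, the difference of the two sides is `(a - b) * (q * u - p * v)`. -/
theorem div_add_mul_le_div_add_mul {K : Type*} [Field K] [LinearOrder K] [IsStrictOrderedRing K]
    {p q u v a b : K} (hpa : 0 < p + u * a) (hqa : 0 < q + v * a) (hba : b ≤ a)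
    (hratio : p * v ≤ q * u) :
    (p + u * b) / (p + u * a) ≤ (q + v * b) / (q + v * a) := by
  rw [div_le_div_iff₀ hpa hqa]
  nlinarith [mul_nonneg (sub_nonneg.2 hba) (sub_nonneg.2 hratio)]

theorem add_div_le_mul_of_one_add_div_mul_le {M δ s L : ℝ} (hs : 0 < s)
    (hL : 1 + M / (δ * s) ≤ L) : s + M / δ ≤ s * L := by
  have h : M / δ / s ≤ L - 1 := by rw [div_div]; linarith
  rw [div_le_iff₀ hs] at h
  linarith

/-- Equation (55): if the hardware budget factor satisfies `L ≥ 1 + M/(δ σ₀²)`, then the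
detection-probability scaling factor with `L` imprecise devices is at least as favorable
as with a single infinitely precise device. -/
theorem hardware_budget_compensation
    (δ σ0sq σxsq M ρasq ρbsq L : ℝ)
    (hδ : 0 < δ) (hσ0 : 0 < σ0sq) (hσx : 0 < σxsq) (hM : 0 < M)
    (hρ : ρbsq < ρasq) (hρb : 0 ≤ ρbsq)
    (hL : 1 + M / (δ * σ0sq) ≤ L) :
    (σ0sq + L * σxsq * ρbsq + M / δ) / (σ0sq + L * σxsq * ρasq + M / δ)
      ≤ (σ0sq + σxsq * ρbsq) / (σ0sq + σxsq * ρasq) := by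
  have hMδ : 0 ≤ M / δ := div_nonneg hM.le hδ.le
  have hbudget : σ0sq + M / δ ≤ σ0sq * L := add_div_le_mul_of_one_add_div_mul_le hσ0 hL
  have hL0 : 0 ≤ L := by nlinarith
  have hρa : 0 ≤ ρasq := hρb.trans hρ.le
  have hratio : (σ0sq + M / δ) * σxsq ≤ σ0sq * (L * σxsq) := by
    rw [← mul_assoc]
    exact mul_le_mul_of_nonneg_right hbudget hσx.le
  rw [add_right_comm σ0sq (L * σxsq * ρbsq), add_right_comm σ0sq (L * σxsq * ρasq)]
  exact div_add_mul_le_div_add_mul (p := σ0sq + M / δ) (q := σ0sq) (u := L * σxsq)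
    (v := σxsq) (by positivity) (by positivity) hρ.le hratio
end
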